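/- The map Sh from moulds to dimoulds, defined by Sh(M)^{r,s}(x_1,...,x_r; x_{r+1},...,x_{r+s}) := Σ over all shuffle interleavings σ of (x_1,...,x_r) and (x_{r+1},...,x_{r+s}) of M^{r+s}(σ), is a Q-algebra homomorphism: Sh(M × N) = Sh(M) × Sh(N), where (M × N)^m(x_1,...,x_m) = Σ_{k=0}^m M^k(x_1,...,x_k) N^{m−k}(x_{k+1},...,x_m) and the dimould product is (A × B)^{r,s}(x_1,...,x_r; x_{r+1},...,x_{r+s}) = Σ_{i=0}^r Σ_{j=0}^s A^{i,j}(x_1,...,x_i; x_{r+1},...,x_{r+j}) B^{r−i,s−j}(x_{i+1},...,x_r; x_{r+j+1},...,x_{r+s}). -/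
import Mathlib


open scoped BigOperators

/-- All shuffle interleavings of two lists, preserving the relative order of each. -/
def shuffles {α : Type*} : List α → List α → List (List α)
  | [], ys => [ys]
  | xs, [] => [xs]
  | x :: xs, y :: ys =>
      ((shuffles xs (y :: ys)).map (x :: ·)) ++ ((shuffles (x :: xs) ys).map (y :: ·))
termination_by xs ys => xs.length + ys.length
decreasing_by all_goals (simp; try omega)

variable {K : Type*} [Field K]

/-- The shuffle sum of a mould `M` over all interleavings of `a` and `b`. -/
def shSum (M : List K → K) (a b : List K) : K := ((shuffles a b).map M).sum

/-- The mould (concatenation-deconcatenation) product. -/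
def mmul (M N : List K → K) (w : List K) : K :=
  ∑ k ∈ Finset.range (w.length + 1), M (w.take k) * N (w.drop k)

/-- The unit mould: `1` in length `0` and `0` otherwise. -/
def one : List K → K := fun l => match l with | [] => 1 | _ => 0

/-- The dimould product. -/
def dmul (A B : List K → List K → K) (a b : List K) : K :=
  ∑ i ∈ Finset.range (a.length + 1), ∑ j ∈ Finset.range (b.length + 1),
    A (a.take i) (b.take j) * B (a.drop i) (b.drop j)

/-- The map from moulds to dimoulds given by summing over shuffle interleavings. -/
def Sh (M : List K → K) : List K → List K → K := fun a b => shSum M a b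

section Aux

lemma shuffles_nil_left {α : Type*} (b : List α) : shuffles [] b = [b] := by
  cases b <;> simp [shuffles]

lemma shuffles_nil_right {α : Type*} (a : List α) : shuffles a [] = [a] := by
  cases a <;> simp [shuffles]

lemma shuffles_cons_cons {α : Type*} (x y : α) (xs ys : List α) :
    shuffles (x :: xs) (y :: ys) =
      ((shuffles xs (y :: ys)).map (x :: ·)) ++ ((shuffles (x :: xs) ys).map (y :: ·)) := by
  rw [shuffles]

variable {K : Type*} [Field K]

lemma shSum_nil_left (M : List K → K) (b : List K) : shSum M [] b = M b := by
  simp [shSum, shuffles_nil_left]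

lemma shSum_nil_right (M : List K → K) (a : List K) : shSum M a [] = M a := by
  simp [shSum, shuffles_nil_right]

lemma shSum_cons_cons (M : List K → K) (x y : K) (xs ys : List K) :
    shSum M (x :: xs) (y :: ys)
      = shSum (fun w => M (x :: w)) xs (y :: ys)
        + shSum (fun w => M (y :: w)) (x :: xs) ys := by
  simp [shSum, shuffles_cons_cons, List.map_map, Function.comp_def]

lemma list_sum_map_add {α : Type*} (l : List α) (f g : α → K) :
    (l.map (fun w => f w + g w)).sum = (l.map f).sum + (l.map g).sum := by
  induction l with
  | nil => simp
  | cons h t ih => simp [ih]; ring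

lemma shSum_add (M N : List K → K) (a b : List K) :
    shSum (fun w => M w + N w) a b = shSum M a b + shSum N a b :=
  list_sum_map_add _ _ _

lemma list_sum_map_mul_left {α : Type*} (l : List α) (c : K) (f : α → K) :
    (l.map (fun w => c * f w)).sum = c * (l.map f).sum := by
  induction l with
  | nil => simp
  | cons h t ih => simp [ih]; ring

lemma shSum_mul_left (c : K) (M : List K → K) (a b : List K) :
    shSum (fun w => c * M w) a b = c * shSum M a b :=
  list_sum_map_mul_left _ _ _

lemma mmul_cons (M N : List K → K) (z : K) (w : List K) :
    mmul M N (z :: w) = M [] * N (z :: w) + mmul (fun u => M (z :: u)) N w := by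
  rw [mmul, mmul, show (z :: w).length + 1 = (w.length + 1) + 1 from by simp,
    Finset.sum_range_succ' _ (w.length + 1)]
  simp [add_comm]

lemma Sh_nil_left (M : List K → K) (b : List K) : Sh M [] b = M b := shSum_nil_left M b

lemma Sh_nil_right (M : List K → K) (a : List K) : Sh M a [] = M a := shSum_nil_right M a

lemma Sh_cons_cons (M : List K → K) (x y : K) (xs ys : List K) :
    Sh M (x :: xs) (y :: ys)
      = Sh (fun w => M (x :: w)) xs (y :: ys)
        + Sh (fun w => M (y :: w)) (x :: xs) ys := shSum_cons_cons M x y xs ys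

lemma double_split (f : ℕ → ℕ → K) (r s : ℕ) :
    ∑ i ∈ Finset.range (r + 2), ∑ j ∈ Finset.range (s + 2), f i j
      = f 0 0
        + ((∑ i ∈ Finset.range (r + 1), ∑ j ∈ Finset.range (s + 1), f (i + 1) (j + 1))
          + (∑ i ∈ Finset.range (r + 1), f (i + 1) 0)
          + (∑ j ∈ Finset.range (s + 1), f 0 (j + 1))) := by
  have h : ∀ i, ∑ j ∈ Finset.range (s + 2), f i j
      = (∑ j ∈ Finset.range (s + 1), f i (j + 1)) + f i 0 :=
    fun i => Finset.sum_range_succ' (f i) (s + 1)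
  simp only [h]
  rw [Finset.sum_range_succ'
    (fun i => (∑ j ∈ Finset.range (s + 1), f i (j + 1)) + f i 0) (r + 1),
    Finset.sum_add_distrib]
  ring

lemma split_right (f : ℕ → ℕ → K) (r s : ℕ) :
    ∑ i ∈ Finset.range r, ∑ j ∈ Finset.range (s + 2), f i j
      = (∑ i ∈ Finset.range r, ∑ j ∈ Finset.range (s + 1), f i (j + 1))
        + ∑ i ∈ Finset.range r, f i 0 := by
  rw [← Finset.sum_add_distrib]
  exact Finset.sum_congr rfl fun i _ => Finset.sum_range_succ' (f i) (s + 1)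

lemma dmul_step (M N : List K → K) (x y : K) (xs ys : List K) :
    dmul (Sh M) (Sh N) (x :: xs) (y :: ys)
      = M [] * shSum N (x :: xs) (y :: ys)
        + dmul (Sh (fun u => M (x :: u))) (Sh N) xs (y :: ys)
        + dmul (Sh (fun u => M (y :: u))) (Sh N) (x :: xs) ys := by
  have e1 : dmul (Sh M) (Sh N) (x :: xs) (y :: ys)
      = M [] * shSum N (x :: xs) (y :: ys)
        + ((∑ i ∈ Finset.range (xs.length + 1), ∑ j ∈ Finset.range (ys.length + 1),
            Sh M (x :: xs.take i) (y :: ys.take j) * Sh N (xs.drop i) (ys.drop j))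
          + (∑ i ∈ Finset.range (xs.length + 1),
              Sh M (x :: xs.take i) [] * Sh N (xs.drop i) (y :: ys))
          + (∑ j ∈ Finset.range (ys.length + 1),
              Sh M [] (y :: ys.take j) * Sh N (x :: xs) (ys.drop j))) := by
    rw [dmul]
    simp only [List.length_cons]
    rw [double_split (fun i j =>
      Sh M ((x :: xs).take i) ((y :: ys).take j) * Sh N ((x :: xs).drop i) ((y :: ys).drop j))
      xs.length ys.length]
    simp [Sh, shSum_nil_left, List.take_succ_cons, List.drop_succ_cons]
  have e2 : dmul (Sh (fun u => M (x :: u))) (Sh N) xs (y :: ys)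
      = (∑ i ∈ Finset.range (xs.length + 1), ∑ j ∈ Finset.range (ys.length + 1),
          Sh (fun u => M (x :: u)) (xs.take i) (y :: ys.take j) * Sh N (xs.drop i) (ys.drop j))
        + ∑ i ∈ Finset.range (xs.length + 1),
            Sh (fun u => M (x :: u)) (xs.take i) [] * Sh N (xs.drop i) (y :: ys) := by
    rw [dmul]
    simp only [List.length_cons]
    rw [split_right (fun i j =>
      Sh (fun u => M (x :: u)) (xs.take i) ((y :: ys).take j)
        * Sh N (xs.drop i) ((y :: ys).drop j)) (xs.length + 1) ys.length]
    simp [List.take_succ_cons, List.drop_succ_cons]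
  have e3 : dmul (Sh (fun u => M (y :: u))) (Sh N) (x :: xs) ys
      = (∑ i ∈ Finset.range (xs.length + 1), ∑ j ∈ Finset.range (ys.length + 1),
          Sh (fun u => M (y :: u)) (x :: xs.take i) (ys.take j) * Sh N (xs.drop i) (ys.drop j))
        + ∑ j ∈ Finset.range (ys.length + 1),
            Sh (fun u => M (y :: u)) [] (ys.take j) * Sh N (x :: xs) (ys.drop j) := by
    rw [dmul]
    simp only [List.length_cons]
    rw [Finset.sum_range_succ' (fun i =>
      ∑ j ∈ Finset.range (ys.length + 1),
        Sh (fun u => M (y :: u)) ((x :: xs).take i) (ys.take j)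
          * Sh N ((x :: xs).drop i) (ys.drop j)) (xs.length + 1)]
    simp [List.take_succ_cons, List.drop_succ_cons]
  rw [e1, e2, e3]
  have h1 : ∀ i j, Sh M (x :: xs.take i) (y :: ys.take j) * Sh N (xs.drop i) (ys.drop j)
      = Sh (fun u => M (x :: u)) (xs.take i) (y :: ys.take j) * Sh N (xs.drop i) (ys.drop j)
        + Sh (fun u => M (y :: u)) (x :: xs.take i) (ys.take j)
          * Sh N (xs.drop i) (ys.drop j) := by
    intro i j; rw [Sh_cons_cons, add_mul]
  have h2 : ∀ i, Sh M (x :: xs.take i) [] = Sh (fun u => M (x :: u)) (xs.take i) [] := by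
    intro i; rw [Sh_nil_right, Sh_nil_right]
  have h3 : ∀ j, Sh M [] (y :: ys.take j) = Sh (fun u => M (y :: u)) [] (ys.take j) := by
    intro j; rw [Sh_nil_left, Sh_nil_left]
  simp only [h1, h2, h3, Finset.sum_add_distrib]
  ring

lemma key_lemma (a : List K) : ∀ (b : List K) (M N : List K → K),
    shSum (mmul M N) a b = dmul (Sh M) (Sh N) a b := by
  induction a with
  | nil =>
    intro b M N
    simp [shSum_nil_left, dmul, mmul, Sh, shSum, shuffles_nil_left]
  | cons x xs iha =>
    intro b
    induction b with
    | nil =>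
      intro M N
      simp [shSum_nil_right, dmul, mmul, Sh, shSum, shuffles_nil_right]
    | cons y ys ihb =>
      intro M N
      rw [shSum_cons_cons]
      have hx : shSum (fun w => mmul M N (x :: w)) xs (y :: ys)
          = M [] * shSum (fun w => N (x :: w)) xs (y :: ys)
            + dmul (Sh (fun u => M (x :: u))) (Sh N) xs (y :: ys) := by
        rw [show (fun w => mmul M N (x :: w))
            = (fun w => M [] * N (x :: w) + mmul (fun u => M (x :: u)) N w) from
          funext fun w => mmul_cons M N x w]
        rw [shSum_add, shSum_mul_left, iha]
      have hy : shSum (fun w => mmul M N (y :: w)) (x :: xs) ys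
          = M [] * shSum (fun w => N (y :: w)) (x :: xs) ys
            + dmul (Sh (fun u => M (y :: u))) (Sh N) (x :: xs) ys := by
        rw [show (fun w => mmul M N (y :: w))
            = (fun w => M [] * N (y :: w) + mmul (fun u => M (y :: u)) N w) from
          funext fun w => mmul_cons M N y w]
        rw [shSum_add, shSum_mul_left, ihb]
      rw [hx, hy, dmul_step, shSum_cons_cons N]
      ring

lemma Sh_one (a b : List K) : Sh (one : List K → K) a b = one a * one b := by
  match a, b with
  | [], [] => simp [Sh_nil_left, one]
  | [], y :: ys => simp [Sh_nil_left, one]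
  | x :: xs, [] => simp [Sh_nil_right, one]
  | x :: xs, y :: ys =>
    rw [show Sh (one : List K → K) (x :: xs) (y :: ys)
        = shSum (one : List K → K) (x :: xs) (y :: ys) from rfl, shSum_cons_cons]
    simp [shSum, one]

end Aux

/-- `Sh` is a ℚ-algebra homomorphism from moulds to dimoulds:
it is additive, sends the unit mould to the unit dimould, and `Sh(M × N) = Sh(M) × Sh(N)`. -/
theorem stmt4 {K : Type*} [Field K] :
    (∀ (M N : List K → K) (a b : List K),
        Sh (fun w => M w + N w) a b = Sh M a b + Sh N a b) ∧
    (∀ (q : ℚ) (M : List K → K) (a b : List K),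
        Sh (fun w => (q : K) * M w) a b = (q : K) * Sh M a b) ∧
    (∀ a b : List K, Sh (one : List K → K) a b = one a * one b) ∧
    (∀ (M N : List K → K) (a b : List K),
        Sh (mmul M N) a b = dmul (Sh M) (Sh N) a b) := by
  refine ⟨fun M N a b => shSum_add M N a b,
    fun q M a b => shSum_mul_left (q : K) M a b,
    fun a b => Sh_one a b,
    fun M N a b => key_lemma a b M N⟩
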